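/- Let σ_s > 0, ŵ > 0, κ > 0, and let γ = ŵ/(2σ_s). Let R be a random variable with the Rayleigh probability density f_R(r) = (r/σ_s²)·exp(-r²/(2σ_s²)) for r > 0. Then the random variable H_p = κ·exp(-2R²/ŵ²) takes values in (0, κ) and has probability density f_{H_p}(h) = (γ²/κ^{γ²})·h^{γ²-1} for 0 < h ≤ κ; equivalently, the pushforward of the Rayleigh distribution under the map r ↦ κ·exp(-2r²/ŵ²) has density (γ²/κ^{γ²})·h^{γ²-1} on (0, κ] with respect to Lebesgue measure. -/

import Mathlib

open MeasureTheory Real Set Filter Topology ENNReal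

lemma rayleigh_tail (σ b : ℝ) (hσ : 0 < σ) (hb : 0 ≤ b) :
    IntegrableOn (fun r => (r / σ ^ 2) * Real.exp (-r ^ 2 / (2 * σ ^ 2))) (Set.Ioi b) ∧
    ∫ r in Set.Ioi b, (r / σ ^ 2) * Real.exp (-r ^ 2 / (2 * σ ^ 2))
      = Real.exp (-b ^ 2 / (2 * σ ^ 2)) := by
  have hσ2 : (0:ℝ) < σ ^ 2 := by positivity
  have hderiv : ∀ x ∈ Set.Ici b,
      HasDerivAt (fun r => -Real.exp (-r ^ 2 / (2 * σ ^ 2)))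
        ((x / σ ^ 2) * Real.exp (-x ^ 2 / (2 * σ ^ 2))) x := by
    intro x _
    have h1 : HasDerivAt (fun r : ℝ => -r ^ 2 / (2 * σ ^ 2)) (-x / σ ^ 2) x := by
      have h := ((hasDerivAt_pow 2 x).neg.div_const (2 * σ ^ 2))
      refine h.congr_deriv ?_
      field_simp
      ring
    have h2 := (h1.exp).neg
    refine h2.congr_deriv ?_
    ring
  have hpos : ∀ x ∈ Set.Ioi b, 0 ≤ (x / σ ^ 2) * Real.exp (-x ^ 2 / (2 * σ ^ 2)) := by
    intro x hx
    have hx0 : 0 ≤ x := le_trans hb (le_of_lt hx)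
    have := Real.exp_pos (-x ^ 2 / (2 * σ ^ 2))
    positivity
  have hlim : Tendsto (fun r : ℝ => -Real.exp (-r ^ 2 / (2 * σ ^ 2))) atTop (𝓝 0) := by
    rw [show (0:ℝ) = -0 by ring]
    apply Tendsto.neg
    apply Real.tendsto_exp_atBot.comp
    have h2 : Tendsto (fun r : ℝ => r ^ 2 / (2 * σ ^ 2)) atTop atTop :=
      (tendsto_pow_atTop (by norm_num)).atTop_div_const (by positivity)
    have := tendsto_neg_atBot_iff.mpr h2
    simpa [neg_div] using this
  refine ⟨integrableOn_Ioi_deriv_of_nonneg' hderiv hpos hlim, ?_⟩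
  rw [integral_Ioi_of_hasDerivAt_of_nonneg' hderiv hpos hlim]
  ring

set_option maxHeartbeats 2000000 in
/-- The pushforward of the Rayleigh distribution (jitter variance σ_s²)
under the map r ↦ κ·exp(-2r²/wHat²) takes values in (0, κ) for r > 0 and has density
(γ²/κ^{γ²})·h^{γ²-1} on (0, κ] with respect to Lebesgue measure, where γ = wHat/(2σ_s). -/
theorem pointing_error_density (σs wHat κ γ : ℝ) (hσs : 0 < σs) (hwHat : 0 < wHat) (hκ : 0 < κ)
    (hγ : γ = wHat / (2 * σs)) :
    (∀ r : ℝ, 0 < r → κ * Real.exp (-2 * r ^ 2 / wHat ^ 2) ∈ Set.Ioo 0 κ) ∧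
    Measure.map (fun r : ℝ => κ * Real.exp (-2 * r ^ 2 / wHat ^ 2))
        (volume.withDensity fun r : ℝ =>
          ENNReal.ofReal (if 0 < r then (r / σs ^ 2) * Real.exp (-r ^ 2 / (2 * σs ^ 2)) else 0))
      = volume.withDensity fun h : ℝ =>
          ENNReal.ofReal (if 0 < h ∧ h ≤ κ then (γ ^ 2 / κ ^ (γ ^ 2)) * h ^ (γ ^ 2 - 1) else 0) := by
  have hw2 : (0:ℝ) < wHat ^ 2 := by positivity
  have hσ2 : (0:ℝ) < σs ^ 2 := by positivity
  have hc : γ ^ 2 = wHat ^ 2 / (4 * σs ^ 2) := by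
    rw [hγ]; field_simp; ring
  have hcpos : 0 < γ ^ 2 := by rw [hc]; positivity
  set c : ℝ := γ ^ 2 with hcdef
  constructor
  · intro r hr
    constructor
    · positivity
    · have h1 : Real.exp (-2 * r ^ 2 / wHat ^ 2) < 1 := by
        rw [Real.exp_lt_one_iff]
        exact div_neg_of_neg_of_pos (by nlinarith) hw2
      nlinarith
  set T : ℝ → ℝ := fun r => κ * Real.exp (-2 * r ^ 2 / wHat ^ 2) with hTdef
  have hT : Measurable T := by
    apply Continuous.measurable
    continuity
  set f : ℝ → ℝ≥0∞ := fun r : ℝ =>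
    ENNReal.ofReal (if 0 < r then (r / σs ^ 2) * Real.exp (-r ^ 2 / (2 * σs ^ 2)) else 0)
    with hfdef
  set g : ℝ → ℝ≥0∞ := fun h : ℝ =>
    ENNReal.ofReal (if 0 < h ∧ h ≤ κ then c / κ ^ c * h ^ (c - 1) else 0) with hgdef
  have hTle : ∀ r : ℝ, T r ≤ κ := by
    intro r
    show κ * Real.exp (-2 * r ^ 2 / wHat ^ 2) ≤ κ
    have h1 : Real.exp (-2 * r ^ 2 / wHat ^ 2) ≤ 1 := by
      rw [Real.exp_le_one_iff]
      exact div_nonpos_of_nonpos_of_nonneg (by nlinarith) (le_of_lt hw2)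
    nlinarith
  have hTpos : ∀ r : ℝ, 0 < T r := fun r => by positivity
  have hf_ind : f = (Set.Ioi (0:ℝ)).indicator
      (fun r => ENNReal.ofReal ((r / σs ^ 2) * Real.exp (-r ^ 2 / (2 * σs ^ 2)))) := by
    funext r
    by_cases hr : 0 < r
    · simp [hfdef, hr, Set.indicator_of_mem (Set.mem_Ioi.mpr hr)]
    · simp [hfdef, hr, Set.indicator_of_notMem (show r ∉ Set.Ioi 0 from hr)]
  have htotal : (volume.withDensity f) Set.univ = ENNReal.ofReal 1 := by
    rw [withDensity_apply _ MeasurableSet.univ, Measure.restrict_univ, hf_ind,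
      lintegral_indicator measurableSet_Ioi]
    rw [← ofReal_integral_eq_lintegral_ofReal (rayleigh_tail σs 0 hσs le_rfl).1]
    · rw [(rayleigh_tail σs 0 hσs le_rfl).2]
      norm_num
    · filter_upwards [ae_restrict_mem measurableSet_Ioi] with x hx
      have hx0 : 0 < x := hx
      have := Real.exp_pos (-x ^ 2 / (2 * σs ^ 2))
      positivity
  haveI hfin : IsFiniteMeasure (Measure.map T (volume.withDensity f)) := by
    constructor
    rw [Measure.map_apply hT MeasurableSet.univ, Set.preimage_univ, htotal]
    exact ENNReal.ofReal_lt_top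
  apply Measure.ext_of_Iic
  intro a
  rw [Measure.map_apply hT measurableSet_Iic, withDensity_apply _ measurableSet_Iic]
  by_cases ha : a ≤ 0
  · have hpre : T ⁻¹' Set.Iic a = ∅ := by
      ext r
      simp only [Set.mem_preimage, Set.mem_Iic, Set.mem_empty_iff_false, iff_false, not_le]
      exact lt_of_le_of_lt ha (hTpos r)
    rw [hpre, measure_empty]
    rw [setLIntegral_congr_fun measurableSet_Iic (g := fun _ => (0:ℝ≥0∞)) ?_, lintegral_zero]
    intro h hh
    have hcond : ¬ (0 < h ∧ h ≤ κ) := by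
      rintro ⟨h1, -⟩
      exact absurd (lt_of_lt_of_le h1 hh) (not_lt.mpr ha)
    simp [hgdef, hcond]
  · push_neg at ha
    set a' : ℝ := min a κ with ha'def
    have ha'pos : 0 < a' := lt_min ha hκ
    have ha'κ : a' ≤ κ := min_le_right _ _
    have ha'a : a' ≤ a := min_le_left _ _
    have hdiv1 : (1:ℝ) ≤ κ / a' := (one_le_div ha'pos).mpr ha'κ
    have hlog : 0 ≤ Real.log (κ / a') := Real.log_nonneg hdiv1
    set r₀ : ℝ := Real.sqrt (wHat ^ 2 / 2 * Real.log (κ / a')) with hr₀def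
    have hr₀nn : 0 ≤ r₀ := Real.sqrt_nonneg _
    have hr₀sq : r₀ ^ 2 = wHat ^ 2 / 2 * Real.log (κ / a') := by
      rw [hr₀def, Real.sq_sqrt (by positivity)]
    -- preimage identification
    have hpre : T ⁻¹' Set.Iic a = Set.Iic (-r₀) ∪ Set.Ici r₀ := by
      ext r
      simp only [Set.mem_preimage, Set.mem_Iic, Set.mem_union, Set.mem_Ici]
      have step1 : T r ≤ a ↔ T r ≤ a' := by
        constructor
        · intro h; exact le_min h (hTle r)
        · intro h; exact le_trans h ha'a
      have e1 : T r ≤ a' ↔ Real.exp (-2 * r ^ 2 / wHat ^ 2) ≤ a' / κ :=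
        (le_div_iff₀' hκ).symm
      have e2 : Real.exp (-2 * r ^ 2 / wHat ^ 2) ≤ a' / κ ↔
          -2 * r ^ 2 / wHat ^ 2 ≤ Real.log (a' / κ) :=
        (Real.le_log_iff_exp_le (by positivity)).symm
      have hlogneg : Real.log (a' / κ) = -Real.log (κ / a') := by
        rw [Real.log_div (ne_of_gt ha'pos) (ne_of_gt hκ),
          Real.log_div (ne_of_gt hκ) (ne_of_gt ha'pos)]
        ring
      have hmul : -2 * r ^ 2 / wHat ^ 2 * wHat ^ 2 = -2 * r ^ 2 := by field_simp
      have step2 : T r ≤ a' ↔ r₀ ^ 2 ≤ r ^ 2 := by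
        rw [e1, e2, hlogneg, hr₀sq]
        constructor <;> intro h
        · nlinarith [mul_le_mul_of_nonneg_right h (le_of_lt hw2)]
        · rw [div_le_iff₀ hw2]
          nlinarith
      have step3 : r₀ ^ 2 ≤ r ^ 2 ↔ (r ≤ -r₀ ∨ r₀ ≤ r) := by
        constructor
        · intro h
          have h2 := Real.sqrt_le_sqrt h
          rw [Real.sqrt_sq hr₀nn, Real.sqrt_sq_eq_abs] at h2
          rcases le_abs.mp h2 with h1 | h1
          · right; exact h1
          · left; linarith
        · rintro (h1 | h1) <;> nlinarith
      rw [step1, step2, step3]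
    rw [hpre]
    have hmeas_union : MeasurableSet (Set.Iic (-r₀) ∪ Set.Ici r₀) :=
      measurableSet_Iic.union measurableSet_Ici
    rw [withDensity_apply _ hmeas_union]
    have hnull : volume ({(0:ℝ), r₀} : Set ℝ) = 0 :=
      Set.Finite.measure_zero (Set.toFinite _) volume
    have hLHS : ∫⁻ r in Set.Iic (-r₀) ∪ Set.Ici r₀, f r
        = ∫⁻ r in Set.Ioi r₀,
            ENNReal.ofReal ((r / σs ^ 2) * Real.exp (-r ^ 2 / (2 * σs ^ 2))) := by
      rw [← lintegral_indicator hmeas_union, ← lintegral_indicator measurableSet_Ioi]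
      apply lintegral_congr_ae
      filter_upwards [compl_mem_ae_iff.mpr hnull] with r hr
      simp only [Set.mem_compl_iff, Set.mem_insert_iff, Set.mem_singleton_iff, not_or] at hr
      obtain ⟨hr0, hrr₀⟩ := hr
      by_cases h : r₀ < r
      · have hrpos : 0 < r := lt_of_le_of_lt hr₀nn h
        rw [Set.indicator_of_mem (show r ∈ Set.Iic (-r₀) ∪ Set.Ici r₀ from
            Or.inr (le_of_lt h)),
          Set.indicator_of_mem (Set.mem_Ioi.mpr h)]
        simp [hfdef, hrpos]
      · push_neg at h
        have hlt : r < r₀ := lt_of_le_of_ne h hrr₀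
        rw [Set.indicator_of_notMem (by simpa using not_lt.mpr h : r ∉ Set.Ioi r₀)]
        by_cases hmem : r ∈ Set.Iic (-r₀) ∪ Set.Ici r₀
        · rw [Set.indicator_of_mem hmem]
          have hrneg : ¬ 0 < r := by
            rcases hmem with h1 | h1
            · have : r ≤ -r₀ := h1
              intro hcon
              nlinarith
            · exact absurd h1 (not_le.mpr hlt)
          simp [hfdef, hrneg]
        · rw [Set.indicator_of_notMem hmem]
    rw [hLHS]
    rw [← ofReal_integral_eq_lintegral_ofReal (rayleigh_tail σs r₀ hσs hr₀nn).1 ?nn,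
      (rayleigh_tail σs r₀ hσs hr₀nn).2]
    case nn =>
      filter_upwards [ae_restrict_mem measurableSet_Ioi] with x hx
      have hx0 : 0 < x := lt_of_le_of_lt hr₀nn hx
      have := Real.exp_pos (-x ^ 2 / (2 * σs ^ 2))
      positivity
    -- value of the exponential
    have hval : Real.exp (-r₀ ^ 2 / (2 * σs ^ 2)) = (a' / κ) ^ c := by
      rw [Real.rpow_def_of_pos (div_pos ha'pos hκ)]
      congr 1
      rw [hr₀sq, Real.log_div (ne_of_gt ha'pos) (ne_of_gt hκ),
        Real.log_div (ne_of_gt hκ) (ne_of_gt ha'pos), hc]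
      field_simp
      ring
    rw [hval]
    -- RHS computation
    have hg_ind : (Set.Iic a).indicator g
        = (Set.Ioc (0:ℝ) a').indicator
            (fun h => ENNReal.ofReal (c / κ ^ c * h ^ (c - 1))) := by
      funext h
      by_cases hmem : h ∈ Set.Ioc (0:ℝ) a'
      · have hIic : h ∈ Set.Iic a := le_trans hmem.2 ha'a
        have hcond : 0 < h ∧ h ≤ κ := ⟨hmem.1, le_trans hmem.2 ha'κ⟩
        rw [Set.indicator_of_mem hIic, Set.indicator_of_mem hmem]
        simp [hgdef, hcond]
      · by_cases hIic : h ∈ Set.Iic a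
        · rw [Set.indicator_of_mem hIic, Set.indicator_of_notMem hmem]
          have hcond : ¬ (0 < h ∧ h ≤ κ) := by
            rintro ⟨h1, h2⟩
            exact hmem ⟨h1, le_min hIic h2⟩
          simp [hgdef, hcond]
        · rw [Set.indicator_of_notMem hIic, Set.indicator_of_notMem hmem]
    have hint : IntegrableOn (fun h : ℝ => c / κ ^ c * h ^ (c - 1)) (Set.Ioc 0 a') := by
      rw [← intervalIntegrable_iff_integrableOn_Ioc_of_le (le_of_lt ha'pos)]
      exact (intervalIntegral.intervalIntegrable_rpow' (by linarith)).const_mul _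
    have hIoc : ∫ h in Set.Ioc (0:ℝ) a', c / κ ^ c * h ^ (c - 1) = (a' / κ) ^ c := by
      rw [← intervalIntegral.integral_of_le (le_of_lt ha'pos),
        intervalIntegral.integral_const_mul, integral_rpow (Or.inl (by linarith))]
      have hc1 : c - 1 + 1 = c := by ring
      rw [hc1, Real.zero_rpow (ne_of_gt hcpos), Real.div_rpow (le_of_lt ha'pos) (le_of_lt hκ)]
      have hκc : (0:ℝ) < κ ^ c := Real.rpow_pos_of_pos hκ c
      field_simp
      ring
    rw [← lintegral_indicator measurableSet_Iic, hg_ind,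
      lintegral_indicator measurableSet_Ioc,
      ← ofReal_integral_eq_lintegral_ofReal hint ?nn2, hIoc]
    case nn2 =>
      filter_upwards [ae_restrict_mem measurableSet_Ioc] with x hx
      have hx0 : 0 < x := hx.1
      have hκc : (0:ℝ) < κ ^ c := Real.rpow_pos_of_pos hκ c
      have hxc : (0:ℝ) < x ^ (c - 1) := Real.rpow_pos_of_pos hx0 _
      positivity
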